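/- Assume no cycle in the original DSR graph D contains a bispecies production edge. Then all cycles in D are s-cycles if and only if all cycles in the modified DSR graph D̃ are s-cycles. -/

import Mathlib

/-!
`Φ` preserves stoichiometric labels, so a cycle of `D̃` on which `Φ` is injective has the same
alternating product as its image, and every cycle of `D` lifts to `D̃` (a bispecies reaction is
entered through the half named after the entering reactant, which is a reactant because
bispecies reactions are irreversible).

If `Φ` identifies two R-nodes of a cycle of `D̃`, they are the two halves of a bispecies
reaction `ρ`, entered from its two reactants. For a 2-cycle the image is a c-pair, whose labels
cancel. Otherwise the species following one of the halves is a product of `ρ` only, so the image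
is a closed walk of `D` containing a bispecies production edge. Cutting the walk short between
repeated reaction nodes keeps that edge, and ends in a cycle of `D` through it, which is excluded.
-/

/-- A reaction network on `n` species: `R` indexes the reaction nodes
(a reversible pair of reactions counts as one node), `src r`/`tgt r` are the
reactant/product stoichiometric vectors, and `rev r` records reversibility.
Generalized inflows/outflows are assumed not to be included in `R`. -/
structure Net (n : ℕ) where
  R : Type
  src : R → Fin n → ℕ
  tgt : R → Fin n → ℕ
  rev : R → Prop

namespace Net

variable {n : ℕ}

/-- (N2): no one-step catalysis. -/
def noCat (N : Net n) : Prop := ∀ r i, N.src r i = 0 ∨ N.tgt r i = 0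

/-- The number of distinct reactant species of reaction `r`. -/
def numReact (N : Net n) (r : N.R) : ℕ :=
  (Finset.univ.filter fun i => N.src r i ≠ 0).card

/-- (N3): every reaction has at most two distinct reactant species. -/
def atMostTwo (N : Net n) : Prop := ∀ r, N.numReact r ≤ 2

/-- A bispecies reaction: exactly two distinct reactant species. -/
def bisp (N : Net n) (r : N.R) : Prop := N.numReact r = 2

/-- (N4): every bispecies reaction is irreversible. -/
def bispIrrev (N : Net n) : Prop := ∀ r, N.bisp r → ¬ N.rev r

/-- Species `i` is adjacent to the R-node `r` in the DSR graph. -/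
def edge (N : Net n) (i : Fin n) (r : N.R) : Prop := N.src r i ≠ 0 ∨ N.tgt r i ≠ 0

/-- The edge between `i` and `r` is directed (toward the species `i`):
the reaction is irreversible and `i` is a product species only. -/
def dir (N : Net n) (i : Fin n) (r : N.R) : Prop :=
  ¬ N.rev r ∧ N.src r i = 0 ∧ N.tgt r i ≠ 0

/-- The stoichiometric label of the edge between `i` and `r` (for a network
with no one-step catalysis at most one summand is nonzero). -/
def lab (N : Net n) (i : Fin n) (r : N.R) : ℕ := N.src r i + N.tgt r i

/-- The edges from `i` and `j` to `r` form a c-pair. -/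
def cpair (N : Net n) (r : N.R) (i j : Fin n) : Prop :=
  i ≠ j ∧ N.src r i ≠ 0 ∧ N.src r j ≠ 0

/-- Bispecies production edge: a directed edge from a bispecies R-node to one
of its product species. -/
def bpe (N : Net n) (i : Fin n) (r : N.R) : Prop := N.bisp r ∧ N.dir i r

/-- The modified network: reactions with at most one reactant species are kept,
while each bispecies reaction `y → y'` is replaced, for each reactant species
`i`, by the reaction `yᵢ·eᵢ → y' + y − yᵢ·eᵢ` (irreversible). -/
def modified (N : Net n) : Net n where
  R := {r : N.R // ¬ N.bisp r} ⊕ {p : N.R × Fin n // N.bisp p.1 ∧ N.src p.1 p.2 ≠ 0}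
  src := Sum.elim (fun r j => N.src r.1 j)
    (fun p j => if j = p.1.2 then N.src p.1.1 j else 0)
  tgt := Sum.elim (fun r j => N.tgt r.1 j)
    (fun p j => if j = p.1.2 then N.tgt p.1.1 j else N.tgt p.1.1 j + N.src p.1.1 j)
  rev := Sum.elim (fun r => N.rev r.1) (fun _ => False)

/-- The map `Φ` on R-nodes: identity on copied reactions, and each modified
reaction node is sent to the original reaction it arose from.  (On species
nodes `Φ` is the identity.) -/
def phi (N : Net n) : (N.modified).R → N.R :=
  Sum.elim (fun r => r.1) (fun p => p.1.1)

/-- A cycle in the DSR graph with `m+2` species nodes `s k` and `m+2` reaction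
nodes `r k`, traversed `s k → r k → s (k+1) → ⋯`; the traversal must be
compatible with edge orientations (directed edges point toward species, so the
edges traversed species-to-reaction must be undirected), and the cycle is
simple. -/
structure Cycle (N : Net n) (m : ℕ) where
  s : Fin (m + 2) → Fin n
  r : Fin (m + 2) → N.R
  edge_sr : ∀ k, N.edge (s k) (r k)
  undir_sr : ∀ k, ¬ N.dir (s k) (r k)
  edge_rs : ∀ k, N.edge (s (k + 1)) (r k)
  sinj : Function.Injective s
  rinj : Function.Injective r

/-- s-cycle: the alternating product/quotient of stoichiometric labels along
the cycle equals 1, i.e. the product of the labels of the species-to-reaction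
edges equals that of the reaction-to-species edges. -/
def Cycle.sCycle {N : Net n} {m : ℕ} (C : N.Cycle m) : Prop :=
  (∏ k, N.lab (C.s k) (C.r k)) = ∏ k, N.lab (C.s (k + 1)) (C.r k)

/-- The cycle contains a bispecies production edge. -/
def Cycle.hasBPE {N : Net n} {m : ℕ} (C : N.Cycle m) : Prop :=
  ∃ k, N.bpe (C.s (k + 1)) (C.r k)

/-- The edge `(i, ρ)` occurs in `C` traversed species-to-reaction. -/
def Cycle.eS {N : Net n} {m : ℕ} (C : N.Cycle m) (i : Fin n) (ρ : N.R) : Prop :=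
  ∃ k, C.s k = i ∧ C.r k = ρ

/-- The edge `(i, ρ)` occurs in `C` traversed reaction-to-species. -/
def Cycle.eR {N : Net n} {m : ℕ} (C : N.Cycle m) (i : Fin n) (ρ : N.R) : Prop :=
  ∃ k, C.s (k + 1) = i ∧ C.r k = ρ

/-- The edge `(i, ρ)` occurs in the cycle `C`. -/
def Cycle.mem {N : Net n} {m : ℕ} (C : N.Cycle m) (i : Fin n) (ρ : N.R) : Prop :=
  C.eS i ρ ∨ C.eR i ρ

/-- The edge `(i, ρ)` lies in the image under `Φ` of the cycle `C` of the
modified DSR graph. -/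
def Cycle.phiMem {N : Net n} {m : ℕ} (C : (N.modified).Cycle m) (i : Fin n)
    (ρ : N.R) : Prop :=
  ∃ k, N.phi (C.r k) = ρ ∧ (C.s k = i ∨ C.s (k + 1) = i)

/-- The image of `C` under `Φ` is a c-pair of the original DSR graph. -/
def Cycle.isCPairImage {N : Net n} {m : ℕ} (C : (N.modified).Cycle m) : Prop :=
  ∃ r i j, N.cpair r i j ∧ ∀ i' r', C.phiMem i' r' ↔ (r' = r ∧ (i' = i ∨ i' = j))

/-- A path of odd length `2t+1` in the DSR graph, with species nodes
`s 0, …, s t` and reaction nodes `r 0, …, r t`, alternating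
`s 0 – r 0 – s 1 – r 1 – ⋯ – s t – r t`; one endpoint is a species node and
the other is a reaction node. -/
structure SRPath (N : Net n) (t : ℕ) where
  s : ℕ → Fin n
  r : ℕ → N.R
  sinj : ∀ k l, k ≤ t → l ≤ t → s k = s l → k = l
  rinj : ∀ k l, k ≤ t → l ≤ t → r k = r l → k = l

/-- The edge `(i, ρ)` occurs in the path `P`. -/
def SRPath.memEdge {N : Net n} {t : ℕ} (P : N.SRPath t) (i : Fin n) (ρ : N.R) : Prop :=
  (∃ k ≤ t, P.s k = i ∧ P.r k = ρ) ∨ (∃ k < t, P.s (k + 1) = i ∧ P.r k = ρ)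

/-- The species node `i` occurs in the path `P`. -/
def SRPath.memS {N : Net n} {t : ℕ} (P : N.SRPath t) (i : Fin n) : Prop :=
  ∃ k ≤ t, P.s k = i

/-- The reaction node `ρ` occurs in the path `P`. -/
def SRPath.memR {N : Net n} {t : ℕ} (P : N.SRPath t) (ρ : N.R) : Prop :=
  ∃ k ≤ t, P.r k = ρ

/-- Two paths are vertex-disjoint. -/
def SRPath.Disjoint {N : Net n} {t1 t2 : ℕ} (P : N.SRPath t1) (Q : N.SRPath t2) : Prop :=
  (∀ i, ¬ (P.memS i ∧ Q.memS i)) ∧ ∀ ρ, ¬ (P.memR ρ ∧ Q.memR ρ)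

/-- The edge `(i, ρ)` is shared by the cycles `C1` and `C2`. -/
def sharedEdge {N : Net n} {m1 m2 : ℕ} (C1 : N.Cycle m1) (C2 : N.Cycle m2)
    (i : Fin n) (ρ : N.R) : Prop := C1.mem i ρ ∧ C2.mem i ρ

/-- Each shared edge is traversed with the same orientation by both cycles. -/
def consistent {N : Net n} {m1 m2 : ℕ} (C1 : N.Cycle m1) (C2 : N.Cycle m2) : Prop :=
  ∀ i ρ, sharedEdge C1 C2 i ρ →
    ((C1.eS i ρ ↔ C2.eS i ρ) ∧ (C1.eR i ρ ↔ C2.eR i ρ))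

/-- `C1` and `C2` have S-to-R intersection: the set of shared edges is
non-empty, orientations are consistent, and the shared edges decompose into
pairwise vertex-disjoint paths of odd length (each with one species endpoint
and one reaction endpoint) — i.e. every connected component of the
intersection is such a path. -/
def SRIntxn {N : Net n} {m1 m2 : ℕ} (C1 : N.Cycle m1) (C2 : N.Cycle m2) : Prop :=
  (∃ i ρ, sharedEdge C1 C2 i ρ) ∧ consistent C1 C2 ∧
    ∃ (ι : Type) (t : ι → ℕ) (P : (a : ι) → N.SRPath (t a)),
      (∀ i ρ, sharedEdge C1 C2 i ρ ↔ ∃ a, (P a).memEdge i ρ) ∧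
      ∀ a b, a ≠ b → (P a).Disjoint (P b)

/-- The DSR graph of `N` has an S-to-R intersection. -/
def hasSRIntxn (N : Net n) : Prop :=
  ∃ (m1 m2 : ℕ) (C1 : N.Cycle m1) (C2 : N.Cycle m2), SRIntxn C1 C2

end Net

namespace Net

variable {n m L : ℕ} {N : Net n}

@[simp] theorem phi_inl (r : {r : N.R // ¬ N.bisp r}) : N.phi (Sum.inl r) = r.1 := rfl

@[simp] theorem phi_inr (p : {p : N.R × Fin n // N.bisp p.1 ∧ N.src p.1 p.2 ≠ 0}) :
    N.phi (Sum.inr p) = p.1.1 := rfl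

theorem modified_lab (x : Fin n) (ρ : N.modified.R) :
    N.modified.lab x ρ = N.lab x (N.phi ρ) := by
  rcases ρ with r | p
  · rfl
  · simp only [lab, modified, phi_inr, Sum.elim_inr]
    split_ifs <;> omega

theorem modified_edge_iff {x : Fin n} {ρ : N.modified.R} :
    N.modified.edge x ρ ↔ N.edge x (N.phi ρ) := by
  rcases ρ with r | p
  · rfl
  · simp only [edge, modified, phi_inr, Sum.elim_inr]
    split_ifs <;> omega

theorem modified_dir_inr_iff {x : Fin n}
    {p : {p : N.R × Fin n // N.bisp p.1 ∧ N.src p.1 p.2 ≠ 0}} :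
    N.modified.dir x (Sum.inr p) ↔ x ≠ p.1.2 ∧ N.edge x p.1.1 := by
  have := p.2.2
  simp only [dir, edge, modified, Sum.elim_inr, not_false_eq_true, true_and]
  by_cases hx : x = p.1.2
  · subst hx; simp [this]
  · simp only [hx, if_false, ne_eq, not_false_eq_true, true_and]
    omega

theorem eq_of_modified_edge_inr {x : Fin n}
    {p : {p : N.R × Fin n // N.bisp p.1 ∧ N.src p.1 p.2 ≠ 0}}
    (he : N.modified.edge x (Sum.inr p)) (hu : ¬ N.modified.dir x (Sum.inr p)) :
    x = p.1.2 := by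
  by_contra hx
  exact hu (modified_dir_inr_iff.2 ⟨hx, modified_edge_iff.1 he⟩)

theorem phi_not_dir {x : Fin n} {ρ : N.modified.R} (he : N.modified.edge x ρ)
    (hu : ¬ N.modified.dir x ρ) : ¬ N.dir x (N.phi ρ) := by
  rcases ρ with r | p
  · exact hu
  · rintro ⟨-, h0, -⟩
    exact p.2.2 (eq_of_modified_edge_inr he hu ▸ h0)

theorem bisp_phi_and_src_ne_zero {x : Fin n} {ρ σ : N.modified.R} (hne : ρ ≠ σ)
    (h : N.phi ρ = N.phi σ) (he : N.modified.edge x ρ) (hu : ¬ N.modified.dir x ρ) :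
    N.bisp (N.phi ρ) ∧ N.src (N.phi ρ) x ≠ 0 := by
  rcases ρ with r | p
  · rcases σ with r' | q
    · exact absurd (congrArg Sum.inl (Subtype.ext h)) hne
    · rw [phi_inl, phi_inr] at h
      exact absurd (h ▸ q.2.1) r.2
  · exact ⟨p.2.1, eq_of_modified_edge_inr he hu ▸ p.2.2⟩

theorem eq_or_eq_of_bisp {r : N.R} {i j x : Fin n} (hb : N.bisp r) (hij : i ≠ j)
    (hi : N.src r i ≠ 0) (hj : N.src r j ≠ 0) (hx : N.src r x ≠ 0) : x = i ∨ x = j := by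
  obtain ⟨a, b, -, hab⟩ := Finset.card_eq_two.1 hb
  have hmem : ∀ y, N.src r y ≠ 0 → y = a ∨ y = b := fun y hy => by
    simpa [hab] using (Finset.mem_filter.2 ⟨Finset.mem_univ y, hy⟩ :
      y ∈ Finset.univ.filter fun i => N.src r i ≠ 0)
  rcases hmem i hi with rfl | rfl <;> rcases hmem j hj with rfl | rfl <;>
    rcases hmem x hx with rfl | rfl <;> simp_all

theorem src_ne_zero_of_bisp (h4 : N.bispIrrev) {i : Fin n} {r : N.R} (he : N.edge i r)
    (hu : ¬ N.dir i r) (hb : N.bisp r) : N.src r i ≠ 0 :=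
  fun h0 => hu ⟨h4 r hb, h0, he.resolve_left (not_not.2 h0)⟩

theorem exists_phi_eq_not_dir (h4 : N.bispIrrev) {i : Fin n} {r : N.R} (he : N.edge i r)
    (hu : ¬ N.dir i r) : ∃ ρ : N.modified.R, N.phi ρ = r ∧ ¬ N.modified.dir i ρ := by
  by_cases hb : N.bisp r
  · refine ⟨Sum.inr ⟨(r, i), hb, src_ne_zero_of_bisp h4 he hu hb⟩, rfl, ?_⟩
    simp [modified_dir_inr_iff]
  · exact ⟨Sum.inl ⟨r, hb⟩, rfl, hu⟩

theorem Cycle.exists_lift (h4 : N.bispIrrev) (C : N.Cycle m) :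
    ∃ Ct : N.modified.Cycle m, Ct.s = C.s ∧ N.phi ∘ Ct.r = C.r := by
  choose ρ hρ hu using fun k => exists_phi_eq_not_dir h4 (C.edge_sr k) (C.undir_sr k)
  refine ⟨⟨C.s, ρ, fun k => ?_, hu, fun k => ?_, C.sinj, fun k l h => C.rinj ?_⟩, rfl, funext hρ⟩
  · exact modified_edge_iff.2 (hρ k ▸ C.edge_sr k)
  · exact modified_edge_iff.2 (hρ k ▸ C.edge_rs k)
  · rw [← hρ k, ← hρ l, h]

theorem Cycle.exists_phi_of_injective (Ct : N.modified.Cycle m)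
    (hinj : Function.Injective (N.phi ∘ Ct.r)) :
    ∃ C : N.Cycle m, Ct.s = C.s ∧ N.phi ∘ Ct.r = C.r :=
  ⟨⟨Ct.s, N.phi ∘ Ct.r, fun k => modified_edge_iff.1 (Ct.edge_sr k),
    fun k => phi_not_dir (Ct.edge_sr k) (Ct.undir_sr k),
    fun k => modified_edge_iff.1 (Ct.edge_rs k), Ct.sinj, hinj⟩, rfl, rfl⟩

theorem Cycle.sCycle_iff_of_phi {Ct : N.modified.Cycle m} {C : N.Cycle m} (hs : Ct.s = C.s)
    (hr : N.phi ∘ Ct.r = C.r) : Ct.sCycle ↔ C.sCycle := by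
  simp only [Cycle.sCycle, modified_lab, hs, ← hr, Function.comp_apply]

theorem Cycle.sCycle_of_phi_not_injective (Ct : N.modified.Cycle 0)
    (h : ¬ Function.Injective (N.phi ∘ Ct.r)) : Ct.sCycle := by
  have h01 : N.phi (Ct.r 0) = N.phi (Ct.r 1) := by
    obtain ⟨k, l, hkl, hne⟩ := Function.not_injective_iff.1 h
    fin_cases k <;> fin_cases l <;> simp_all
  simp [Cycle.sCycle, Fin.prod_univ_two, modified_lab, h01]
  ring

/-- Like `Cycle`, but indexed by `ℕ` (with `s L = s 0` closing the walk) and allowed to pass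
through a reaction node more than once. -/
structure ClosedWalk (N : Net n) (L : ℕ) where
  s : ℕ → Fin n
  r : ℕ → N.R
  edge_sr : ∀ k < L, N.edge (s k) (r k)
  undir_sr : ∀ k < L, ¬ N.dir (s k) (r k)
  edge_rs : ∀ k < L, N.edge (s (k + 1)) (r k)
  s_length : s L = s 0
  sinj : ∀ k < L, ∀ l < L, s k = s l → k = l

/-- Cuts out the species `s (x + 1), …, s y` between two visits of the same reaction node. -/
def ClosedWalk.shortcut (W : N.ClosedWalk L) {x y : ℕ} (hxy : x < y) (hy : y < L)
    (hr : W.r x = W.r y) : N.ClosedWalk (L - (y - x)) where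
  s k := W.s (if k ≤ x then k else k + (y - x))
  r k := W.r (if k ≤ x then k else k + (y - x))
  edge_sr k hk := W.edge_sr _ (by split_ifs <;> omega)
  undir_sr k hk := W.undir_sr _ (by split_ifs <;> omega)
  edge_rs k hk := by
    rcases lt_trichotomy k x with h | rfl | h
    · rw [if_pos (by omega), if_pos h.le]
      exact W.edge_rs k (by omega)
    · rw [if_neg (by omega), if_pos le_rfl, hr, show k + 1 + (y - k) = y + 1 by omega]
      exact W.edge_rs y hy
    · rw [if_neg (by omega), if_neg (by omega), show k + 1 + (y - x) = k + (y - x) + 1 by omega]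
      exact W.edge_rs _ (by omega)
  s_length := by
    rw [if_neg (by omega), if_pos (Nat.zero_le x), show L - (y - x) + (y - x) = L by omega]
    exact W.s_length
  sinj k hk l hl h := by
    have := W.sinj _ (by split_ifs <;> omega) _ (by split_ifs <;> omega) h
    split_ifs at this <;> omega

theorem ClosedWalk.shortcut_s_zero (W : N.ClosedWalk L) {x y : ℕ} (hxy : x < y) (hy : y < L)
    (hr : W.r x = W.r y) : (W.shortcut hxy hy hr).s 0 = W.s 0 := by
  simp [shortcut]

theorem ClosedWalk.shortcut_r_last (W : N.ClosedWalk L) {x y : ℕ} (hxy : x < y) (hy : y < L)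
    (hr : W.r x = W.r y) : (W.shortcut hxy hy hr).r (L - (y - x) - 1) = W.r (L - 1) := by
  simp only [shortcut]
  split_ifs with h
  · rw [show L - (y - x) - 1 = x by omega, hr, show y = L - 1 by omega]
  · rw [show L - (y - x) - 1 + (y - x) = L - 1 by omega]

def ClosedWalk.toCycle (W : N.ClosedWalk (m + 2))
    (hr : ∀ k < m + 2, ∀ l < m + 2, W.r k = W.r l → k = l) : N.Cycle m where
  s k := W.s k
  r k := W.r k
  edge_sr k := W.edge_sr k k.isLt
  undir_sr k := W.undir_sr k k.isLt
  edge_rs k := by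
    rw [Fin.val_add_one]
    split_ifs with h
    · rw [← W.s_length, h]
      exact W.edge_rs _ (by simp)
    · exact W.edge_rs k k.isLt
  sinj k l h := Fin.ext (W.sinj k k.isLt l l.isLt h)
  rinj k l h := Fin.ext (hr k k.isLt l l.isLt h)

theorem ClosedWalk.exists_cycle_of_dir (W : N.ClosedWalk L) (hL : 0 < L)
    (hdir : N.dir (W.s 0) (W.r (L - 1))) :
    ∃ (m : ℕ) (C : N.Cycle m) (k : Fin (m + 2)), C.s (k + 1) = W.s 0 ∧ C.r k = W.r (L - 1) := by
  induction L using Nat.strong_induction_on with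
  | _ L ih =>
  have hL2 : 2 ≤ L := by
    by_contra h
    obtain rfl : L = 1 := by omega
    exact W.undir_sr 0 hL hdir
  by_cases hinj : ∀ k < L, ∀ l < L, W.r k = W.r l → k = l
  · obtain ⟨m, rfl⟩ : ∃ m, L = m + 2 := ⟨L - 2, by omega⟩
    exact ⟨m, W.toCycle hinj, Fin.last _, by simp [toCycle], by simp [toCycle]⟩
  obtain ⟨x, y, hxy, hy, hr⟩ : ∃ x y, x < y ∧ y < L ∧ W.r x = W.r y := by
    push Not at hinj
    obtain ⟨k, hk, l, hl, h, hne⟩ := hinj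
    rcases Nat.lt_or_gt_of_ne hne with h' | h'
    exacts [⟨k, l, h', hl, h⟩, ⟨l, k, h', hk, h.symm⟩]
  -- the repetition cannot be `r 0 = r (L - 1)`, since `s 0 → r 0` is undirected
  have hshort : y - x < L - 1 := by
    by_contra
    obtain ⟨rfl, rfl⟩ : x = 0 ∧ y = L - 1 := by omega
    rw [← hr] at hdir
    exact W.undir_sr 0 hL hdir
  obtain ⟨m, C, k, hs, hr'⟩ := ih _ (by omega) (W.shortcut hxy hy hr) (by omega)
    (by rwa [shortcut_s_zero, shortcut_r_last])
  exact ⟨m, C, k, hs.trans (W.shortcut_s_zero ..), hr'.trans (W.shortcut_r_last ..)⟩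

open Fin.NatCast in
def Cycle.phiWalk (Ct : N.modified.Cycle m) (c : Fin (m + 2)) : N.ClosedWalk (m + 2) where
  s k := Ct.s (k + c)
  r k := N.phi (Ct.r (k + c))
  edge_sr _ _ := modified_edge_iff.1 (Ct.edge_sr _)
  undir_sr _ _ := phi_not_dir (Ct.edge_sr _) (Ct.undir_sr _)
  edge_rs k _ := by
    simpa only [Nat.cast_succ, add_right_comm] using
      modified_edge_iff.1 (Ct.edge_rs ((k : Fin (m + 2)) + c))
  s_length := by simp
  sinj k hk l hl h := by
    have := add_right_cancel (Ct.sinj h)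
    simpa [Fin.ext_iff, Nat.mod_eq_of_lt hk, Nat.mod_eq_of_lt hl] using this

open Fin.NatCast in
theorem Cycle.exists_cycle_of_dir_phi (Ct : N.modified.Cycle m) (a : Fin (m + 2))
    (h : N.dir (Ct.s (a + 1)) (N.phi (Ct.r a))) :
    ∃ (m' : ℕ) (C : N.Cycle m') (k : Fin (m' + 2)),
      C.s (k + 1) = Ct.s (a + 1) ∧ C.r k = N.phi (Ct.r a) := by
  have hlast : (m : Fin (m + 2)) + 1 + (a + 1) = a := by
    rw [← Nat.cast_succ, add_comm a 1, ← add_assoc, ← Nat.cast_succ, Fin.natCast_self, zero_add]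
  simpa [phiWalk, hlast] using
    (Ct.phiWalk (a + 1)).exists_cycle_of_dir (by omega) (by simpa [phiWalk, hlast] using h)

/-- `s k` and `s l` are the two reactants of the bispecies reaction `Φ (r l)`, so `s (l + 1)` is
one of its products only. -/
theorem Cycle.bpe_of_phi_eq (h4 : N.bispIrrev) (Ct : N.modified.Cycle m) {k l : Fin (m + 2)}
    (hkl : k ≠ l) (hφ : N.phi (Ct.r k) = N.phi (Ct.r l)) (hlk : l + 1 ≠ k) :
    N.bpe (Ct.s (l + 1)) (N.phi (Ct.r l)) := by
  have hne := Ct.rinj.ne hkl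
  obtain ⟨hb, hk⟩ := bisp_phi_and_src_ne_zero hne hφ (Ct.edge_sr k) (Ct.undir_sr k)
  obtain ⟨-, hl⟩ := bisp_phi_and_src_ne_zero hne.symm hφ.symm (Ct.edge_sr l) (Ct.undir_sr l)
  rw [hφ] at hb hk
  have h0 : N.src (N.phi (Ct.r l)) (Ct.s (l + 1)) = 0 := by
    by_contra hx
    rcases eq_or_eq_of_bisp hb (Ct.sinj.ne hkl) hk hl hx with h | h
    · exact hlk (Ct.sinj h)
    · exact add_ne_left.2 one_ne_zero (Ct.sinj h)
  have he := modified_edge_iff.1 (Ct.edge_rs l)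
  exact ⟨hb, h4 _ hb, h0, he.resolve_left (not_not.2 h0)⟩

theorem Cycle.phi_comp_injective (h4 : N.bispIrrev)
    (hnb : ∀ (m : ℕ) (C : N.Cycle m), ¬ C.hasBPE) (Ct : N.modified.Cycle m) (hm : 0 < m) :
    Function.Injective (N.phi ∘ Ct.r) := by
  intro k l hφ
  by_contra hkl
  have hnext : l + 1 ≠ k ∨ k + 1 ≠ l := by
    rw [or_iff_not_imp_left, not_not]
    rintro rfl h
    -- `l + 1 + 1 = l` would mean `2 = 0` in `Fin (m + 2)`
    rw [add_assoc, add_eq_left] at h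
    simp only [Fin.ext_iff, Fin.val_add, Fin.val_one, Fin.val_zero] at h
    rw [Nat.mod_eq_of_lt (by omega)] at h
    omega
  obtain ⟨a, hb⟩ : ∃ a, N.bpe (Ct.s (a + 1)) (N.phi (Ct.r a)) := by
    rcases hnext with h | h
    exacts [⟨l, Ct.bpe_of_phi_eq h4 hkl hφ h⟩, ⟨k, Ct.bpe_of_phi_eq h4 (Ne.symm hkl) hφ.symm h⟩]
  obtain ⟨m', C, j, hs, hr⟩ := Ct.exists_cycle_of_dir_phi a hb.2
  exact hnb m' C ⟨j, hs ▸ hr ▸ hb⟩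

end Net

theorem stmt_14_general {n : ℕ} (N : Net n) (h4 : N.bispIrrev)
    (hnb : ∀ (m : ℕ) (C : N.Cycle m), ¬ C.hasBPE) :
    (∀ (m : ℕ) (C : N.Cycle m), C.sCycle) ↔
      ∀ (m : ℕ) (Ct : (N.modified).Cycle m), Ct.sCycle := by
  refine ⟨fun h m Ct => ?_, fun h m C => ?_⟩
  · by_cases hinj : Function.Injective (N.phi ∘ Ct.r)
    · obtain ⟨C, hs, hr⟩ := Ct.exists_phi_of_injective hinj
      exact (Net.Cycle.sCycle_iff_of_phi hs hr).2 (h m C)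
    · obtain rfl : m = 0 := by
        by_contra hm
        exact hinj (Ct.phi_comp_injective h4 hnb (Nat.pos_of_ne_zero hm))
      exact Ct.sCycle_of_phi_not_injective hinj
  · obtain ⟨Ct, hs, hr⟩ := C.exists_lift h4
    exact (Net.Cycle.sCycle_iff_of_phi hs hr).1 (h m Ct)

/-- Assume no cycle of the original DSR graph contains a bispecies production
edge.  Then all cycles of the original DSR graph are s-cycles iff all cycles
of the modified DSR graph are s-cycles. -/
theorem stmt_14 {n : ℕ} (N : Net n) (h2 : N.noCat) (h3 : N.atMostTwo)
    (h4 : N.bispIrrev) (hnb : ∀ (m : ℕ) (C : N.Cycle m), ¬ C.hasBPE) :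
    (∀ (m : ℕ) (C : N.Cycle m), C.sCycle) ↔
      ∀ (m : ℕ) (Ct : (N.modified).Cycle m), Ct.sCycle :=
  stmt_14_general N h4 hnb
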